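/- arXiv:2206.12569 — 3 statements merged into one kernel-verified Lean document; each statement's English description precedes it below -/
import Mathlib

section
/- Warm-start equals cold-start for kernel regression, two-dataset case (inductive step of Theorem 1): Let S and T be finite subsets of X with S ⊆ T, and assume the Gram matrices K_S and K_T are invertible. Let f₀ : X → ℝ be an arbitrary function, let f₁ be the kernel-regression update of f₀ on S, and let f₂ be the kernel-regression update of f₁ on T. Then for every x ∈ X, f₂(x) equals the kernel-regression update of f₀ on T evaluated at x; that is, warm-starting from the model trained on S and then training on T gives exactly the same predictor as training on T from scratch. -/
open Matrix

/-- The Gram matrix of a kernel `K` on a finite set `S` of inputs. -/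
def gramMatrix {X : Type*} (K : X → X → ℝ) (S : Finset X) : Matrix S S ℝ :=
  Matrix.of fun i j => K i j

/-- The kernel-regression update of a base predictor `f` on the finite labeled set
`{(x, Y x) : x ∈ S}`: this is the result of retraining an infinitely wide network,
warm-started from `f`, on that dataset (eq. (9) of the paper). -/
noncomputable def krUpdate {X : Type*} [DecidableEq X] (K : X → X → ℝ) (Y : X → ℝ)
    (f : X → ℝ) (S : Finset X) : X → ℝ :=
  fun x => f x + (fun j : S => K x j) ⬝ᵥ (gramMatrix K S)⁻¹.mulVec (fun j : S => Y j - f j)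

/-! The update on `S` changes `f₀` by a linear combination of the kernel sections `K · j`,
`j ∈ S ⊆ T`. Retraining on `T` is insensitive to such a change: on `T` it shifts the residual
by `K_T w`, which `K_T⁻¹` turns back into exactly the combination that was added. -/

section

variable {X : Type*}

theorem dotProduct_eq_dotProduct_extend_of_subset {R : Type*} [Semiring R] {S T : Finset X}
    (hST : S ⊆ T) (g : X → R) (v : S → R) :
    (fun j : S => g j) ⬝ᵥ v =
      (fun j : T => g j) ⬝ᵥ Function.extend (fun j : S => (⟨j, hST j.2⟩ : T)) v 0 := by
  have hinj : Function.Injective fun j : S => (⟨j, hST j.2⟩ : T) :=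
    fun i j hij => Subtype.ext (congrArg Subtype.val hij :)
  refine Fintype.sum_of_injective _ hinj _ _ (fun j hj => ?_) (fun j => ?_)
  · simp [Function.extend_apply' _ _ _ hj]
  · simp [hinj.extend_apply]

theorem gramMatrix_mulVec_apply (K : X → X → ℝ) (T : Finset X) (w : T → ℝ) (j : T) :
    (gramMatrix K T *ᵥ w) j = (fun i : T => K j i) ⬝ᵥ w :=
  rfl

variable [DecidableEq X] (K : X → X → ℝ) (Y : X → ℝ)

theorem exists_krUpdate_eq_add_dotProduct_of_subset (f : X → ℝ) {S T : Finset X} (hST : S ⊆ T) :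
    ∃ w : T → ℝ, krUpdate K Y f S = fun x => f x + (fun j : T => K x j) ⬝ᵥ w :=
  ⟨_, funext fun x => congrArg (f x + ·) (dotProduct_eq_dotProduct_extend_of_subset hST _ _)⟩

theorem krUpdate_add_dotProduct (f : X → ℝ) {T : Finset X} (hT : IsUnit (gramMatrix K T).det)
    (w : T → ℝ) :
    krUpdate K Y (fun x => f x + (fun j : T => K x j) ⬝ᵥ w) T = krUpdate K Y f T := by
  have hres : (fun j : T => Y j - (f j + (fun i : T => K j i) ⬝ᵥ w)) =
      (fun j : T => Y j - f j) - gramMatrix K T *ᵥ w := by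
    funext j
    rw [Pi.sub_apply, gramMatrix_mulVec_apply]
    ring
  funext x
  simp only [krUpdate, hres, mulVec_sub, mulVec_mulVec, nonsing_inv_mul _ hT, one_mulVec,
    dotProduct_sub]
  ring

end

theorem warm_start_eq_cold_start_two_general {X : Type*} [DecidableEq X]
    (K : X → X → ℝ) (Y : X → ℝ) (S T : Finset X) (hST : S ⊆ T)
    (hT : IsUnit (gramMatrix K T).det)
    (f₀ : X → ℝ) :
    ∀ x : X, krUpdate K Y (krUpdate K Y f₀ S) T x = krUpdate K Y f₀ T x := by
  intro x
  obtain ⟨w, hw⟩ := exists_krUpdate_eq_add_dotProduct_of_subset K Y f₀ hST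
  rw [hw, krUpdate_add_dotProduct K Y f₀ hT w]

/-- Warm-start equals cold-start for kernel regression, two-dataset case:
training on `S` and then retraining on `T ⊇ S` gives the same predictor as
training on `T` from scratch. -/
theorem warm_start_eq_cold_start_two {X : Type*} [DecidableEq X]
    (K : X → X → ℝ) (Y : X → ℝ) (S T : Finset X) (hST : S ⊆ T)
    (hS : IsUnit (gramMatrix K S).det) (hT : IsUnit (gramMatrix K T).det)
    (f₀ : X → ℝ) :
    ∀ x : X, krUpdate K Y (krUpdate K Y f₀ S) T x = krUpdate K Y f₀ T x :=
  warm_start_eq_cold_start_two_general K Y S T hST hT f₀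
end

section
/- Convergence of the test-point prediction to the fully trained network (eq. (4) converges to eq. (5)): If K : Matrix (Fin n) (Fin n) ℝ is positive definite (K.PosDef), then for all a, Y, v₀ : Fin n → ℝ and c₀ : ℝ, the function h t := c₀ + a ⬝ᵥ (K⁻¹.mulVec ((1 − exp (−t • K)).mulVec (Y − v₀))) tends, as t → ∞, to the limit c₀ + a ⬝ᵥ (K⁻¹.mulVec (Y − v₀)), which is the prediction of the fully trained kernel-regression model at the test point. -/
/-- The matrix exponential (`Matrix.exp` in later Mathlib): the exponential in the
topological algebra of square matrices. -/
noncomputable def Matrix.exp (𝕂 : Type*) {n : ℕ} [Field 𝕂] [TopologicalSpace 𝕂]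
    [IsTopologicalRing 𝕂] (A : Matrix (Fin n) (Fin n) 𝕂) : Matrix (Fin n) (Fin n) 𝕂 :=
  (NormedSpace.expSeries 𝕂 (Matrix (Fin n) (Fin n) 𝕂)).sum A

open Matrix Filter

/-!
Diagonalise `K = U D U⁻¹` with `U` orthogonal and `D` the diagonal of the (positive)
eigenvalues `λᵢ`. Then `exp (-t • K) = U diag (e^{-t λᵢ}) U⁻¹ → 0`, and the prediction is a
continuous function of `exp (-t • K)`.
-/

open Topology

theorem Matrix.exp_eq_normedSpace_exp {𝕂 : Type*} {n : ℕ} [Field 𝕂] [CharZero 𝕂]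
    [TopologicalSpace 𝕂] [IsTopologicalRing 𝕂] (A : Matrix (Fin n) (Fin n) 𝕂) :
    Matrix.exp 𝕂 A = NormedSpace.exp A := by
  rw [Matrix.exp, NormedSpace.exp_eq_expSeries_sum 𝕂]

section

variable {m : Type*} [Fintype m] [DecidableEq m]

theorem Matrix.tendsto_exp_neg_smul_diagonal_atTop {d : m → ℝ} (hd : ∀ i, 0 < d i) :
    Tendsto (fun t : ℝ => NormedSpace.exp (-t • diagonal d)) atTop (𝓝 0) := by
  have hentries : Tendsto (fun t : ℝ => NormedSpace.exp (-t • d)) atTop (𝓝 0) := by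
    refine tendsto_pi_nhds.mpr fun i => ?_
    simp only [Pi.exp_def, Pi.smul_apply, smul_eq_mul, ← Real.exp_eq_exp_ℝ]
    exact Real.tendsto_exp_atBot.comp (tendsto_neg_atTop_atBot.atBot_mul_const (hd i))
  simpa only [← diagonal_smul, exp_diagonal, Function.comp_def, id_eq] using
    (continuous_id.matrix_diagonal.tendsto' 0 0 (by simp)).comp hentries

theorem Matrix.PosDef.tendsto_exp_neg_smul_atTop {K : Matrix m m ℝ} (hK : K.PosDef) :
    Tendsto (fun t : ℝ => NormedSpace.exp (-t • K)) atTop (𝓝 0) := by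
  set U : Matrix m m ℝ := (hK.isHermitian.eigenvectorUnitary : Matrix m m ℝ)
  have hU : IsUnit U := (Unitary.toUnits hK.isHermitian.eigenvectorUnitary).isUnit
  have hK_eq : K = U * diagonal hK.isHermitian.eigenvalues * U⁻¹ := by
    rw [inv_eq_left_inv (Unitary.coe_star_mul_self _)]
    simpa using hK.isHermitian.spectral_theorem
  have hconj : Continuous fun M : Matrix m m ℝ => U * M * U⁻¹ := by fun_prop
  have hconj_diag := (hconj.tendsto' 0 0 (by simp)).comp
    (tendsto_exp_neg_smul_diagonal_atTop hK.eigenvalues_pos)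
  rw [hK_eq]
  simpa only [Function.comp_def, ← exp_conj _ _ hU, mul_smul_comm, smul_mul_assoc] using hconj_diag

end

/-- Convergence of the test-point prediction to the fully trained network
(eq. (4) converges to eq. (5)): for positive definite `K`, the test-point prediction
`h t = c₀ + a ⬝ᵥ K⁻¹ (1 − exp (−t • K)) (Y − v₀)` tends to the fully trained
kernel-regression prediction `c₀ + a ⬝ᵥ K⁻¹ (Y − v₀)` as `t → ∞`. -/
theorem test_point_converges (n : ℕ) (K : Matrix (Fin n) (Fin n) ℝ)
    (hK : K.PosDef) (a Y v₀ : Fin n → ℝ) (c₀ : ℝ) :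
    Tendsto (fun t : ℝ => c₀ +
        a ⬝ᵥ K⁻¹.mulVec ((1 - Matrix.exp ℝ (-t • K)).mulVec (Y - v₀)))
      atTop (nhds (c₀ + a ⬝ᵥ K⁻¹.mulVec (Y - v₀))) := by
  have hprediction : Continuous fun M : Matrix (Fin n) (Fin n) ℝ =>
      c₀ + a ⬝ᵥ K⁻¹.mulVec ((1 - M).mulVec (Y - v₀)) := by
    fun_prop
  simpa only [Function.comp_def, Matrix.exp_eq_normedSpace_exp, sub_zero, one_mulVec] using
    (hprediction.tendsto 0).comp hK.tendsto_exp_neg_smul_atTop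
end

section
/- Exponential decay of the residual under an eigenvalue lower bound: Let K : Matrix (Fin n) (Fin n) ℝ be symmetric (K.IsSymm) and let λ > 0 satisfy λ * ‖x‖² ≤ x ⬝ᵥ K.mulVec x for every x : Fin n → ℝ. Then for every v : Fin n → ℝ and every t ≥ 0, ‖(exp (−t • K)).mulVec v‖ ≤ Real.exp (−λ * t) * ‖v‖. -/
open Matrix

/-- The Euclidean (`ℓ²`) norm of a vector in `Fin n → ℝ`. -/
noncomputable def euclNorm {n : ℕ} (v : Fin n → ℝ) : ℝ :=
  ‖(WithLp.equiv 2 (Fin n → ℝ)).symm v‖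

/-! Along `x' = -K x` the Lyapunov function `e^{2λs} ‖x s‖²` has derivative
`2 e^{2λs} (λ ‖x‖² - ⟪x, K x⟫) ≤ 0`, so it is nonincreasing; comparing `s = t` with `s = 0`
gives the decay. -/

open scoped RealInnerProductSpace

theorem norm_le_exp_mul_norm_of_inner_deriv_le {E : Type*} [NormedAddCommGroup E]
    [InnerProductSpace ℝ E] {u u' : ℝ → E} {lam : ℝ} (hu : ∀ s, HasDerivAt u (u' s) s)
    (hdiss : ∀ s, ⟪u s, u' s⟫ ≤ -lam * ‖u s‖ ^ 2) {t : ℝ} (ht : 0 ≤ t) :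
    ‖u t‖ ≤ Real.exp (-lam * t) * ‖u 0‖ := by
  have hg : ∀ s, HasDerivAt (fun s => Real.exp (2 * lam * s) * ‖u s‖ ^ 2)
      (Real.exp (2 * lam * s) * (2 * lam) * ‖u s‖ ^ 2
        + Real.exp (2 * lam * s) * (2 * ⟪u s, u' s⟫)) s := fun s =>
    ((((hasDerivAt_id s).const_mul (2 * lam)).exp).mul (hu s).norm_sq).congr_deriv (by simp)
  have hg_anti : Antitone fun s => Real.exp (2 * lam * s) * ‖u s‖ ^ 2 := by
    refine antitone_of_deriv_nonpos (fun s => (hg s).differentiableAt) fun s => ?_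
    rw [(hg s).deriv]
    nlinarith [hdiss s, Real.exp_pos (2 * lam * s)]
  have hgt : Real.exp (2 * lam * t) * ‖u t‖ ^ 2 ≤ ‖u 0‖ ^ 2 := by
    simpa using hg_anti ht
  have hsq : ‖u t‖ ^ 2 ≤ (Real.exp (-lam * t) * ‖u 0‖) ^ 2 := by
    have hexp : Real.exp (-lam * t) ^ 2 * Real.exp (2 * lam * t) = 1 := by
      rw [← Real.exp_nat_mul, ← Real.exp_add]
      ring_nf
      exact Real.exp_zero
    nlinarith [mul_le_mul_of_nonneg_left hgt (sq_nonneg (Real.exp (-lam * t)))]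
  exact (pow_le_pow_iff_left₀ (norm_nonneg _) (by positivity) two_ne_zero).mp hsq

namespace Matrix

variable {n : ℕ}

theorem hasDerivAt_exp_smul_mulVec (A : Matrix (Fin n) (Fin n) ℝ) (v : Fin n → ℝ) (s : ℝ) :
    HasDerivAt (fun s : ℝ => NormedSpace.exp (s • A) *ᵥ v)
      (A *ᵥ (NormedSpace.exp (s • A) *ᵥ v)) s := by
  let _ : NormedRing (Matrix (Fin n) (Fin n) ℝ) := Matrix.linftyOpNormedRing
  let _ : NormedAlgebra ℝ (Matrix (Fin n) (Fin n) ℝ) := Matrix.linftyOpNormedAlgebra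
  rw [mulVec_mulVec]
  exact (((mulVecBilin ℝ ℝ).flip v).toContinuousLinearMap.hasFDerivAt).comp_hasDerivAt s
    (hasDerivAt_exp_smul_const' A s)

theorem exp_eq_normedSpace_exp_s10 (A : Matrix (Fin n) (Fin n) ℝ) :
    Matrix.exp ℝ A = NormedSpace.exp A := by
  rw [Matrix.exp, NormedSpace.exp_eq_expSeries_sum ℝ]

end Matrix

theorem euclNorm_eq_norm_toLp {n : ℕ} (v : Fin n → ℝ) : euclNorm v = ‖WithLp.toLp 2 v‖ := rfl

theorem EuclideanSpace.real_inner_toLp_toLp {n : ℕ} (x y : Fin n → ℝ) :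
    ⟪WithLp.toLp 2 x, WithLp.toLp 2 y⟫ = x ⬝ᵥ y := by
  rw [EuclideanSpace.inner_toLp_toLp, dotProduct_comm]
  rfl

theorem residual_exponential_decay_general (n : ℕ) (K : Matrix (Fin n) (Fin n) ℝ)
    (lam : ℝ)
    (hbound : ∀ x : Fin n → ℝ, lam * (euclNorm x) ^ 2 ≤ x ⬝ᵥ K.mulVec x)
    (v : Fin n → ℝ) (t : ℝ) (ht : 0 ≤ t) :
    euclNorm ((Matrix.exp ℝ (-t • K)).mulVec v) ≤ Real.exp (-lam * t) * euclNorm v := by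
  set x : ℝ → Fin n → ℝ := fun s => NormedSpace.exp (s • -K) *ᵥ v
  have hx : ∀ s, HasDerivAt (fun s => WithLp.toLp 2 (x s)) (WithLp.toLp 2 (-K *ᵥ x s)) s :=
    fun s => (EuclideanSpace.equiv (Fin n) ℝ).symm.hasFDerivAt.comp_hasDerivAt s
      (hasDerivAt_exp_smul_mulVec (-K) v s)
  have hdiss : ∀ s, ⟪WithLp.toLp 2 (x s), WithLp.toLp 2 (-K *ᵥ x s)⟫
      ≤ -lam * ‖WithLp.toLp 2 (x s)‖ ^ 2 := fun s => by
    rw [EuclideanSpace.real_inner_toLp_toLp, neg_mulVec, dotProduct_neg, ← euclNorm_eq_norm_toLp]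
    linarith [hbound (x s)]
  simpa [x, exp_eq_normedSpace_exp_s10, euclNorm_eq_norm_toLp] using
    norm_le_exp_mul_norm_of_inner_deriv_le hx hdiss ht

/-- Exponential decay of the residual under an eigenvalue lower bound: if `K` is
symmetric and `λ * ‖x‖² ≤ ⟨x, K x⟩` for all `x` with `λ > 0`, then
`‖exp (−t • K) v‖ ≤ exp (−λ t) ‖v‖` for all `t ≥ 0`. -/
theorem residual_exponential_decay (n : ℕ) (K : Matrix (Fin n) (Fin n) ℝ)
    (hsymm : K.IsSymm) (lam : ℝ) (hlam : 0 < lam)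
    (hbound : ∀ x : Fin n → ℝ, lam * (euclNorm x) ^ 2 ≤ x ⬝ᵥ K.mulVec x)
    (v : Fin n → ℝ) (t : ℝ) (ht : 0 ≤ t) :
    euclNorm ((Matrix.exp ℝ (-t • K)).mulVec v) ≤ Real.exp (-lam * t) * euclNorm v :=
  residual_exponential_decay_general n K lam hbound v t ht
end
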